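/- Under the standing assumptions (convexity and differentiability of each J_i in its own variable, and μ-strong monotonicity and θ0-Lipschitz continuity of the pseudo-gradient F), the extended pseudo-gradient 𝐅 is θ-Lipschitz continuous for some θ ∈ [μ, θ0]: there exists θ with μ ≤ θ ≤ θ0 such that ‖𝐅(𝐱) − 𝐅(𝐲)‖ ≤ θ‖𝐱 − 𝐲‖ for all 𝐱, 𝐲 ∈ ℝ^{Nn}. -/

import Mathlib

open scoped InnerProductSpace

/-- The strategy-profile space `ℝ^n = ℝ^{n_1} × ⋯ × ℝ^{n_N}`, with the Euclidean (ℓ²)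
structure. Block `i` is agent `i`'s strategy space `ℝ^{n_i}`. -/
abbrev Prof (N : ℕ) (d : Fin N → ℕ) : Type :=
  PiLp 2 (fun i : Fin N => EuclideanSpace ℝ (Fin (d i)))

/-- The stacked space `ℝ^{Nn}` of all agents' estimates; block `i` is agent `i`'s estimate
`𝐱_i ∈ ℝ^n` of the full strategy profile. -/
abbrev Est (N : ℕ) (d : Fin N → ℕ) : Type :=
  PiLp 2 (fun _ : Fin N => Prof N d)

/-- The pseudo-gradient `F(x) := col(∇_{x_i} J_i(x_i, x_{−i}))_i`, built from the partial
gradients `G i`. -/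
noncomputable def pseudoGrad {N : ℕ} {d : Fin N → ℕ}
    (G : ∀ i : Fin N, Prof N d → EuclideanSpace ℝ (Fin (d i)))
    (x : Prof N d) : Prof N d :=
  WithLp.toLp 2 (fun i => G i x)

/-- The extended pseudo-gradient `𝐅(𝐱) := col(∇_{x_i} J_i(𝐱_{i,i}, 𝐱_{i,−i}))_i`. -/
noncomputable def extPseudoGrad {N : ℕ} {d : Fin N → ℕ}
    (G : ∀ i : Fin N, Prof N d → EuclideanSpace ℝ (Fin (d i)))
    (bx : Est N d) : Prof N d :=
  WithLp.toLp 2 (fun i => G i (bx i))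

/-- `Rᵀ` places block `i` of `v ∈ ℝ^n` in the `(i,i)`-block position of `ℝ^{Nn}`,
with zeros elsewhere. -/
noncomputable def RT {N : ℕ} {d : Fin N → ℕ} (v : Prof N d) : Est N d :=
  WithLp.toLp 2 (fun i => WithLp.toLp 2 (Function.update (0 : Prof N d) i (v i)))

/-- `𝐖 = W ⊗ I_n` acting blockwise: `(𝐖𝐱)_i = Σ_j w_{ij} 𝐱_j`. -/
noncomputable def Wact {N : ℕ} {d : Fin N → ℕ} (W : Matrix (Fin N) (Fin N) ℝ) (bx : Est N d) : Est N d :=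
  WithLp.toLp 2 (fun i => ∑ j, W i j • bx j)

/-- `F_a(𝐱) := α Rᵀ𝐅(𝐱) + (I_{Nn} − 𝐖)𝐱`. -/
noncomputable def Fa {N : ℕ} {d : Fin N → ℕ} (α : ℝ)
    (G : ∀ i : Fin N, Prof N d → EuclideanSpace ℝ (Fin (d i)))
    (W : Matrix (Fin N) (Fin N) ℝ) (bx : Est N d) : Est N d :=
  α • RT (extPseudoGrad G bx) + (bx - Wact W bx)

/-- `𝛀 := {𝐱 ∈ ℝ^{Nn} : 𝐱_{i,i} ∈ Ω_i for all i}`. -/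
def bigOmega {N : ℕ} {d : Fin N → ℕ}
    (Ω : ∀ i : Fin N, Set (EuclideanSpace ℝ (Fin (d i)))) : Set (Est N d) :=
  {bx | ∀ i, bx i i ∈ Ω i}

/-- Normal cone operator of a closed convex set `S` at `x`
(empty if `x ∉ S`). -/
def normalCone {E : Type*} [NormedAddCommGroup E] [InnerProductSpace ℝ E]
    (S : Set E) (x : E) : Set E :=
  {v | x ∈ S ∧ ∀ z ∈ S, ⟪v, z - x⟫_ℝ ≤ 0}

/-- The consensus subspace `E_n := {𝟏_N ⊗ y : y ∈ ℝ^n} ⊆ ℝ^{Nn}`. -/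
def consensus (N : ℕ) (d : Fin N → ℕ) : Set (Est N d) :=
  {bx | ∃ y : Prof N d, ∀ i, bx i = y}

/-!
Take `θ = θ0`. Block `i` of `𝐅(𝐱) − 𝐅(𝐲)` is block `i` of `F(𝐱_i) − F(𝐲_i)`, so its norm is at most
`θ0 ‖𝐱_i − 𝐲_i‖`; summing squares over `i` gives the bound. And `μ ≤ θ0` because
`μ ‖x − y‖² ≤ ⟪x − y, F x − F y⟫ ≤ θ0 ‖x − y‖²` for any `x ≠ y`.
-/

theorem le_of_strongly_monotone_of_lipschitz {E : Type*} [NormedAddCommGroup E]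
    [InnerProductSpace ℝ E] [Nontrivial E] {F : E → E} {μ L : ℝ}
    (hmon : ∀ x y, ⟪x - y, F x - F y⟫_ℝ ≥ μ * ‖x - y‖ ^ 2)
    (hlip : ∀ x y, ‖F x - F y‖ ≤ L * ‖x - y‖) : μ ≤ L := by
  obtain ⟨x, y, hxy⟩ := exists_pair_ne E
  have hpos : 0 < ‖x - y‖ ^ 2 := by positivity [sub_ne_zero.mpr hxy]
  refine le_of_mul_le_mul_right ?_ hpos
  calc μ * ‖x - y‖ ^ 2 ≤ ⟪x - y, F x - F y⟫_ℝ := hmon x y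
    _ ≤ ‖x - y‖ * ‖F x - F y‖ := real_inner_le_norm _ _
    _ ≤ ‖x - y‖ * (L * ‖x - y‖) := by gcongr; exact hlip x y
    _ = L * ‖x - y‖ ^ 2 := by ring

theorem PiLp.norm_sub_le_of_forall_norm_sub_le {ι : Type*} [Fintype ι] {α β : ι → Type*}
    [∀ i, SeminormedAddCommGroup (α i)] [∀ i, SeminormedAddCommGroup (β i)]
    (u v : PiLp 2 α) (x y : PiLp 2 β) {L : ℝ} (hL : 0 ≤ L)
    (h : ∀ i, ‖u i - v i‖ ≤ L * ‖x i - y i‖) : ‖u - v‖ ≤ L * ‖x - y‖ := by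
  refine le_of_sq_le_sq ?_ (by positivity)
  calc ‖u - v‖ ^ 2 = ∑ i, ‖u i - v i‖ ^ 2 := by
        simp only [PiLp.norm_sq_eq_of_L2, PiLp.sub_apply]
    _ ≤ ∑ i, (L * ‖x i - y i‖) ^ 2 := by gcongr with i; exact h i
    _ = (L * ‖x - y‖) ^ 2 := by
        simp only [mul_pow, ← Finset.mul_sum, PiLp.norm_sq_eq_of_L2, PiLp.sub_apply]

theorem Prof.nontrivial {N : ℕ} {d : Fin N → ℕ} (hN : 0 < N) (hd : ∀ i, 0 < d i) :
    Nontrivial (Prof N d) :=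
  have : Nonempty (Fin (d ⟨0, hN⟩)) := ⟨⟨0, hd _⟩⟩
  have := Pi.nontrivial_at (f := fun i : Fin N => EuclideanSpace ℝ (Fin (d i))) ⟨0, hN⟩
  inferInstance

theorem norm_sub_extPseudoGrad_le {N : ℕ} {d : Fin N → ℕ}
    (G : ∀ i : Fin N, Prof N d → EuclideanSpace ℝ (Fin (d i))) {L : ℝ} (hL : 0 ≤ L)
    (hlip : ∀ x y : Prof N d, ‖pseudoGrad G x - pseudoGrad G y‖ ≤ L * ‖x - y‖)
    (bx by_ : Est N d) :
    ‖extPseudoGrad G bx - extPseudoGrad G by_‖ ≤ L * ‖bx - by_‖ := by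
  refine PiLp.norm_sub_le_of_forall_norm_sub_le _ _ _ _ hL fun i => ?_
  calc ‖G i (bx i) - G i (by_ i)‖
      = ‖(pseudoGrad G (bx i) - pseudoGrad G (by_ i)) i‖ := rfl
    _ ≤ ‖pseudoGrad G (bx i) - pseudoGrad G (by_ i)‖ := PiLp.norm_apply_le _ i
    _ ≤ L * ‖bx i - by_ i‖ := hlip _ _

theorem stmt7_general {N : ℕ} {d : Fin N → ℕ} (hN : 0 < N) (hd : ∀ i, 0 < d i)
    (G : ∀ i : Fin N, Prof N d → EuclideanSpace ℝ (Fin (d i)))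
    (μ θ0 : ℝ) (hθ0 : 0 < θ0)
    (hFmon : ∀ x y : Prof N d,
      ⟪x - y, pseudoGrad G x - pseudoGrad G y⟫_ℝ ≥ μ * ‖x - y‖ ^ 2)
    (hFlip : ∀ x y : Prof N d, ‖pseudoGrad G x - pseudoGrad G y‖ ≤ θ0 * ‖x - y‖) :
    ∃ θ : ℝ, μ ≤ θ ∧ θ ≤ θ0 ∧
      ∀ bx by_ : Est N d,
        ‖extPseudoGrad G bx - extPseudoGrad G by_‖ ≤ θ * ‖bx - by_‖ := by
  have := Prof.nontrivial hN hd
  exact ⟨θ0, le_of_strongly_monotone_of_lipschitz hFmon hFlip, le_rfl,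
    norm_sub_extPseudoGrad_le G hθ0.le hFlip⟩

/-- Lemma 3 of the paper. Under the standing assumptions, the extended
pseudo-gradient `𝐅` is `θ`-Lipschitz continuous for some `θ ∈ [μ, θ0]`. -/
theorem stmt7 {N : ℕ} {d : Fin N → ℕ} (hN : 0 < N) (hd : ∀ i, 0 < d i)
    (J : ∀ _ : Fin N, Prof N d → ℝ)
    (hJconv : ∀ i (x : Prof N d),
      ConvexOn ℝ Set.univ (fun y => J i (WithLp.toLp 2 (Function.update x i y))))
    (G : ∀ i : Fin N, Prof N d → EuclideanSpace ℝ (Fin (d i)))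
    (hGgrad : ∀ i (x : Prof N d),
      HasGradientAt (fun y => J i (WithLp.toLp 2 (Function.update x i y))) (G i x) (x i))
    (μ θ0 : ℝ) (hμ : 0 < μ) (hθ0 : 0 < θ0)
    (hFmon : ∀ x y : Prof N d,
      ⟪x - y, pseudoGrad G x - pseudoGrad G y⟫_ℝ ≥ μ * ‖x - y‖ ^ 2)
    (hFlip : ∀ x y : Prof N d, ‖pseudoGrad G x - pseudoGrad G y‖ ≤ θ0 * ‖x - y‖) :
    ∃ θ : ℝ, μ ≤ θ ∧ θ ≤ θ0 ∧
      ∀ bx by_ : Est N d,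
        ‖extPseudoGrad G bx - extPseudoGrad G by_‖ ≤ θ * ‖bx - by_‖ :=
  stmt7_general hN hd G μ θ0 hθ0 hFmon hFlip
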